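/- arXiv:2404.06319 — 7 statements merged into one kernel-verified Lean document; each statement's English description precedes it below -/
import Mathlib

section
/- If ρ(|A|) < 1 and the vector -(I - |A|)^{-1} b has at least one negative entry, then the absolute value equation Ax - |x| = b has no solution. -/
open Matrix

/-- Componentwise absolute value of a vector. -/
noncomputable def absv {n : ℕ} (x : Fin n → ℝ) : Fin n → ℝ := fun i => |x i|

/-- Euclidean norm of a vector. -/
noncomputable def enorm {n : ℕ} (x : Fin n → ℝ) : ℝ := Real.sqrt (∑ i, x i ^ 2)

/-- Largest singular value (spectral / operator 2-norm). -/
noncomputable def sigmaMax {n : ℕ} (A : Matrix (Fin n) (Fin n) ℝ) : ℝ :=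
  sSup {r | ∃ x : Fin n → ℝ, _root_.enorm x = 1 ∧ r = _root_.enorm (A.mulVec x)}

/-- Smallest singular value. -/
noncomputable def sigmaMin {n : ℕ} (A : Matrix (Fin n) (Fin n) ℝ) : ℝ :=
  sInf {r | ∃ x : Fin n → ℝ, _root_.enorm x = 1 ∧ r = _root_.enorm (A.mulVec x)}

/-- Spectral radius of a real matrix (via its complex spectrum). -/
noncomputable def specRad {n : ℕ} (A : Matrix (Fin n) (Fin n) ℝ) : ENNReal :=
  spectralRadius ℂ (A.map (Complex.ofReal ·))

/-!
Since `|A x| ≤ |A| |x|` entrywise, a solution of `A x - |x| = b` satisfies `(I - |A|) |x| ≤ -b`.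
When `ρ(|A|) < 1`, Gelfand's formula makes the Neumann series `∑ |A|^k` converge, so
`(I - |A|)⁻¹ = ∑ |A|^k` is entrywise nonnegative and multiplying by it preserves `≤`.
Hence `|x| ≤ -(I - |A|)⁻¹ b`, which is impossible if the right-hand side has a negative entry.
-/

open Filter

theorem summable_norm_pow_of_spectralRadius_lt_one {A : Type*} [NormedRing A] [NormedAlgebra ℂ A]
    [CompleteSpace A] {a : A} (h : spectralRadius ℂ a < 1) : Summable fun k : ℕ => ‖a ^ k‖ := by
  obtain ⟨r, hρr, hr1⟩ := ENNReal.lt_iff_exists_nnreal_btwn.mp h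
  refine .of_norm_bounded_eventually_nat
    (summable_geometric_of_lt_one r.coe_nonneg (mod_cast hr1)) ?_
  have gelfand := spectrum.pow_nnnorm_pow_one_div_tendsto_nhds_spectralRadius a
  filter_upwards [gelfand.eventually_lt_const hρr, eventually_gt_atTop 0] with k hk hk0
  rw [← ENNReal.coe_rpow_of_nonneg _ (by positivity), ENNReal.coe_lt_coe, one_div,
    NNReal.rpow_inv_lt_iff (by positivity), NNReal.rpow_natCast] at hk
  rw [norm_norm]
  exact_mod_cast hk.le

namespace Matrix

section LinftyOp

attribute [local instance] Matrix.linftyOpNormedAddCommGroup Matrix.linftyOpNormedRing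
  Matrix.linftyOpNormedAlgebra

theorem linfty_opNorm_map_ofReal {m n : Type*} [Fintype m] [Fintype n] (B : Matrix m n ℝ) :
    ‖B.map (Complex.ofReal ·)‖ = ‖B‖ := by
  simp [linfty_opNorm_def]

-- The conclusion concerns the entrywise topology; the `L^∞` operator norm induces it.
theorem summable_pow_of_specRad_lt_one {n : ℕ} {B : Matrix (Fin n) (Fin n) ℝ}
    (h : specRad B < 1) : Summable (B ^ ·) :=
  .of_norm <| (summable_norm_pow_of_spectralRadius_lt_one h).congr fun k => by
    rw [← linfty_opNorm_map_ofReal]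
    exact congrArg norm (B.map_pow Complex.ofRealHom k).symm

end LinftyOp

variable {ι m R : Type*} [Fintype ι]

theorem mulVec_le_mulVec_of_nonneg [Semiring R] [PartialOrder R] [IsOrderedRing R]
    {C : Matrix m ι R} (hC : ∀ i j, 0 ≤ C i j) {u v : ι → R} (huv : u ≤ v) :
    C *ᵥ u ≤ C *ᵥ v :=
  fun i => dotProduct_le_dotProduct_of_nonneg_left huv (hC i)

theorem mulVec_le_map_abs_mulVec_abs [Ring R] [LinearOrder R] [IsOrderedRing R]
    (A : Matrix m ι R) (x : ι → R) : A *ᵥ x ≤ A.map abs *ᵥ |x| := fun _ =>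
  Finset.sum_le_sum fun _ _ => (le_abs_self _).trans_eq (abs_mul _ _)

section NeumannSeries

variable [DecidableEq ι] [CommRing R] [TopologicalSpace R] [IsTopologicalRing R] {B : Matrix ι ι R}

theorem inv_one_sub_eq_tsum_pow [T2Space R] (h : Summable (B ^ ·)) :
    (1 - B)⁻¹ = ∑' k : ℕ, B ^ k :=
  inv_eq_left_inv h.tsum_pow_mul_one_sub

theorem inv_one_sub_apply_nonneg [PartialOrder R] [IsOrderedRing R] [OrderClosedTopology R]
    (hB : ∀ i j, 0 ≤ B i j) (h : Summable (B ^ ·)) (i j : ι) : 0 ≤ (1 - B)⁻¹ i j := by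
  rw [inv_one_sub_eq_tsum_pow h]
  exact (Pi.hasSum.mp (Pi.hasSum.mp h.hasSum i) j).nonneg fun k => pow_apply_nonneg hB k i j

theorem le_inv_one_sub_mulVec_of_one_sub_mulVec_le [PartialOrder R] [IsOrderedRing R]
    [OrderClosedTopology R] (hB : ∀ i j, 0 ≤ B i j) (h : Summable (B ^ ·)) {y c : ι → R}
    (hy : (1 - B) *ᵥ y ≤ c) : y ≤ (1 - B)⁻¹ *ᵥ c :=
  calc y = (1 - B)⁻¹ *ᵥ ((1 - B) *ᵥ y) := by
        rw [mulVec_mulVec, inv_one_sub_eq_tsum_pow h, h.tsum_pow_mul_one_sub, one_mulVec]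
    _ ≤ (1 - B)⁻¹ *ᵥ c := mulVec_le_mulVec_of_nonneg (inv_one_sub_apply_nonneg hB h) hy

end NeumannSeries

theorem abs_le_of_mulVec_sub_abs_eq [DecidableEq ι] [CommRing R] [LinearOrder R] [IsOrderedRing R]
    [TopologicalSpace R] [IsTopologicalRing R] [OrderClosedTopology R] {A : Matrix ι ι R}
    (h : Summable (A.map abs ^ ·)) {x b : ι → R} (hx : A *ᵥ x - |x| = b) :
    |x| ≤ -((1 - A.map abs)⁻¹ *ᵥ b) := by
  rw [← mulVec_neg]
  refine le_inv_one_sub_mulVec_of_one_sub_mulVec_le (fun _ _ => abs_nonneg _) h fun i => ?_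
  have hAx := mulVec_le_map_abs_mulVec_abs A x i
  simp only [sub_mulVec, one_mulVec, ← hx, Pi.sub_apply, Pi.neg_apply, neg_sub]
  exact sub_le_sub_left hAx _

end Matrix

theorem stmt2 {n : ℕ} (A : Matrix (Fin n) (Fin n) ℝ) (b : Fin n → ℝ)
    (h : specRad (A.map (fun a => |a|)) < 1)
    (i : Fin n) (hi : (-((1 - A.map (fun a => |a|))⁻¹.mulVec b)) i < 0) :
    ¬ ∃ x : Fin n → ℝ, A.mulVec x - absv x = b := by
  rintro ⟨x, hx⟩
  have hbound := Matrix.abs_le_of_mulVec_sub_abs_eq (Matrix.summable_pow_of_specRad_lt_one h) hx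
  exact ((abs_nonneg (x i)).trans (hbound i)).not_gt hi
end

section
/- If the smallest singular value of A is strictly greater than 1, then for every b ∈ ℝ^n the absolute value equation Ax - |x| = b has at most one solution. -/
open Matrix

lemma enorm_nonneg' {n : ℕ} (x : Fin n → ℝ) : 0 ≤ _root_.enorm x := Real.sqrt_nonneg _

lemma enorm_smul' {n : ℕ} (c : ℝ) (x : Fin n → ℝ) :
    _root_.enorm (c • x) = |c| * _root_.enorm x := by
  unfold _root_.enorm
  have : ∑ i, (c • x) i ^ 2 = c ^ 2 * ∑ i, x i ^ 2 := by
    rw [Finset.mul_sum]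
    refine Finset.sum_congr rfl fun i _ => ?_
    simp [Pi.smul_apply, mul_pow]
  rw [this, Real.sqrt_mul (sq_nonneg c), Real.sqrt_sq_eq_abs]

lemma enorm_pos_of_ne {n : ℕ} {x : Fin n → ℝ} (hx : x ≠ 0) : 0 < _root_.enorm x := by
  rcases (enorm_nonneg' x).lt_or_eq with h | h
  · exact h
  · exfalso
    apply hx
    have hsum : ∑ i, x i ^ 2 = 0 := by
      have := h.symm
      unfold _root_.enorm at this
      have hnn : 0 ≤ ∑ i, x i ^ 2 := Finset.sum_nonneg fun i _ => sq_nonneg _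
      nlinarith [Real.sq_sqrt hnn, this]
    funext i
    have := (Finset.sum_eq_zero_iff_of_nonneg (fun i _ => sq_nonneg (x i))).mp hsum i (Finset.mem_univ i)
    exact pow_eq_zero_iff (by norm_num) |>.mp this

lemma enorm_abs_sub_le {n : ℕ} (x y : Fin n → ℝ) :
    _root_.enorm (absv x - absv y) ≤ _root_.enorm (x - y) := by
  unfold _root_.enorm
  apply Real.sqrt_le_sqrt
  apply Finset.sum_le_sum
  intro i _
  have h1 : |(|x i| - |y i|)| ≤ |x i - y i| := abs_abs_sub_abs_le_abs_sub _ _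
  have := pow_le_pow_left₀ (abs_nonneg _) h1 2
  simpa [absv, sq_abs] using this

theorem stmt5 {n : ℕ} (A : Matrix (Fin n) (Fin n) ℝ) (h : 1 < sigmaMin A) :
    ∀ b x y : Fin n → ℝ,
      A.mulVec x - absv x = b → A.mulVec y - absv y = b → x = y := by
  intro b x y hx hy
  by_contra hne
  set d : Fin n → ℝ := x - y with hd
  have hd0 : d ≠ 0 := sub_ne_zero.mpr hne
  have hc : 0 < _root_.enorm d := enorm_pos_of_ne hd0
  set c := _root_.enorm d with hcdef
  set u : Fin n → ℝ := c⁻¹ • d with hu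
  have hunorm : _root_.enorm u = 1 := by
    rw [hu, enorm_smul', abs_of_pos (inv_pos.mpr hc)]
    field_simp
    exact hcdef.symm
  have hAd : A.mulVec d = absv x - absv y := by
    have heq : A.mulVec x - absv x = A.mulVec y - absv y := hx.trans hy.symm
    rw [hd, A.mulVec_sub]
    exact sub_eq_sub_iff_sub_eq_sub.mp heq
  have hle : _root_.enorm (A.mulVec d) ≤ c := by
    rw [hAd, hcdef, hd]; exact enorm_abs_sub_le x y
  have hAu : _root_.enorm (A.mulVec u) ≤ 1 := by
    rw [hu, A.mulVec_smul, enorm_smul', abs_of_pos (inv_pos.mpr hc)]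
    rw [inv_mul_le_iff₀ hc, mul_one]
    exact hle
  have hmem : _root_.enorm (A.mulVec u) ∈ {r | ∃ z : Fin n → ℝ, _root_.enorm z = 1 ∧ r = _root_.enorm (A.mulVec z)} :=
    ⟨u, hunorm, rfl⟩
  have hbdd : BddBelow {r | ∃ z : Fin n → ℝ, _root_.enorm z = 1 ∧ r = _root_.enorm (A.mulVec z)} :=
    ⟨0, fun r ⟨z, _, hr⟩ => hr ▸ enorm_nonneg' _⟩
  have : sigmaMin A ≤ _root_.enorm (A.mulVec u) := csInf_le hbdd hmem
  linarith
end

section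
/- If A is invertible and ρ(|A^{-1}|) < 1, then for every b ∈ ℝ^n the absolute value equation Ax - |x| = b has at most one solution. -/
open Matrix

/-!
If `x` and `y` both solve `A x - |x| = b`, then `A (x - y) = |x| - |y|`, so `v = |x - y|` satisfies
`v ≤ B v` for the nonnegative matrix `B = |A⁻¹|`, and iterating, `v ≤ B ^ k v` for every `k`.
By Gelfand's formula `ρ(B) < 1` forces `B ^ k → 0`, hence `v ≤ 0` and `x = y`.
-/

open Filter Topology

theorem tendsto_pow_atTop_nhds_zero_of_spectralRadius_lt_one {A : Type*} [NormedRing A]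
    [NormedAlgebra ℂ A] [CompleteSpace A] (a : A) (h : spectralRadius ℂ a < 1) :
    Tendsto (fun k : ℕ => a ^ k) atTop (𝓝 0) := by
  obtain ⟨r, hρr, hr1⟩ := ENNReal.lt_iff_exists_nnreal_btwn.1 h
  have hgelfand := spectrum.pow_nnnorm_pow_one_div_tendsto_nhds_spectralRadius a
  have hbound : ∀ᶠ k : ℕ in atTop, ‖a ^ k‖ ≤ (r : ℝ) ^ k := by
    filter_upwards [hgelfand.eventually_lt_const hρr, eventually_ge_atTop 1] with k hk hk1
    rw [one_div, ENNReal.rpow_inv_lt_iff (by positivity), ENNReal.rpow_natCast] at hk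
    exact_mod_cast hk.le
  exact squeeze_zero_norm' hbound
    (tendsto_pow_atTop_nhds_zero_of_lt_one r.2 (by exact_mod_cast hr1))

theorem Matrix.tendsto_pow_atTop_nhds_zero_of_specRad_lt_one {n : ℕ}
    (M : Matrix (Fin n) (Fin n) ℝ) (h : specRad M < 1) :
    Tendsto (fun k : ℕ => M ^ k) atTop (𝓝 0) := by
  -- Any Banach algebra norm on complex matrices will do: all induce the entrywise topology.
  let _ := @Matrix.linftyOpNormedRing (Fin n) ℂ _ _ _
  let _ := @Matrix.linftyOpNormedAlgebra ℂ (Fin n) ℂ _ _ _ _ _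
  have : CompleteSpace (Matrix (Fin n) (Fin n) ℂ) := FiniteDimensional.complete ℂ _
  have hC := tendsto_pow_atTop_nhds_zero_of_spectralRadius_lt_one _ h
  have hre : Continuous fun N : Matrix (Fin n) (Fin n) ℂ => N.map Complex.re :=
    continuous_id.matrix_map Complex.continuous_re
  have hpow (k : ℕ) : (M.map (Complex.ofReal ·) ^ k).map Complex.re = M ^ k := by
    rw [show M.map (Complex.ofReal ·) = Complex.ofRealHom.mapMatrix M from rfl, ← map_pow]
    ext i j
    simp
  simpa [Function.comp_def, hpow] using (hre.tendsto 0).comp hC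

section NonnegMatrix

variable {ι R : Type*} [Fintype ι] {B : Matrix ι ι R}

theorem Matrix.mulVec_le_mulVec_of_nonneg_s6 [Semiring R] [PartialOrder R] [IsOrderedRing R]
    (hB : ∀ i j, 0 ≤ B i j) {u v : ι → R} (huv : u ≤ v) : B *ᵥ u ≤ B *ᵥ v :=
  fun i => dotProduct_le_dotProduct_of_nonneg_left huv (hB i)

theorem Matrix.le_pow_mulVec_of_le_mulVec [DecidableEq ι] [Semiring R] [PartialOrder R]
    [IsOrderedRing R] (hB : ∀ i j, 0 ≤ B i j) {v : ι → R} (hv : v ≤ B *ᵥ v) (k : ℕ) :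
    v ≤ B ^ k *ᵥ v := by
  induction k with
  | zero => simp
  | succ k ih =>
    calc v ≤ B *ᵥ v := hv
      _ ≤ B *ᵥ (B ^ k *ᵥ v) := mulVec_le_mulVec_of_nonneg_s6 hB ih
      _ = B ^ (k + 1) *ᵥ v := by rw [mulVec_mulVec, pow_succ']

theorem Matrix.nonpos_of_le_mulVec [DecidableEq ι] [Semiring R] [PartialOrder R]
    [IsOrderedRing R] [TopologicalSpace R] [IsTopologicalSemiring R] [OrderClosedTopology R]
    (hB : ∀ i j, 0 ≤ B i j) (hlim : Tendsto (fun k : ℕ => B ^ k) atTop (𝓝 0)) {v : ι → R}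
    (hv : v ≤ B *ᵥ v) : v ≤ 0 := by
  have hlimv : Tendsto (fun k : ℕ => B ^ k *ᵥ v) atTop (𝓝 0) := by
    simpa [Function.comp_def] using
      ((continuous_id.matrix_mulVec continuous_const).tendsto 0).comp hlim
  exact ge_of_tendsto' hlimv (le_pow_mulVec_of_le_mulVec hB hv)

end NonnegMatrix

theorem Matrix.abs_mulVec_le {m ι R : Type*} [Fintype ι] [Ring R] [LinearOrder R]
    [IsStrictOrderedRing R] (M : Matrix m ι R) (v : ι → R) :
    |M *ᵥ v| ≤ M.map abs *ᵥ |v| := fun i => by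
  simp only [Pi.abs_apply, mulVec, dotProduct, map_apply, ← abs_mul]
  exact Finset.abs_sum_le_sum_abs _ _

theorem abs_sub_le_of_mulVec_sub_abs_eq {ι : Type*} [Fintype ι] [DecidableEq ι]
    {A : Matrix ι ι ℝ} (hA : IsUnit A.det) {x y : ι → ℝ} (h : A *ᵥ x - |x| = A *ᵥ y - |y|) :
    |x - y| ≤ A⁻¹.map abs *ᵥ |x - y| := by
  have hxy : x - y = A⁻¹ *ᵥ (|x| - |y|) := by
    rw [← sub_eq_sub_iff_sub_eq_sub.1 h, ← mulVec_sub, mulVec_mulVec, nonsing_inv_mul _ hA,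
      one_mulVec]
  calc |x - y| = |A⁻¹ *ᵥ (|x| - |y|)| := by rw [hxy]
    _ ≤ A⁻¹.map abs *ᵥ |(|x| - |y|)| := abs_mulVec_le _ _
    _ ≤ A⁻¹.map abs *ᵥ |x - y| := mulVec_le_mulVec_of_nonneg_s6 (fun _ _ => abs_nonneg _)
        fun i => by simpa using abs_abs_sub_abs_le_abs_sub (x i) (y i)

theorem stmt6 {n : ℕ} (A : Matrix (Fin n) (Fin n) ℝ) (hA : IsUnit A.det)
    (h : specRad ((A⁻¹).map (fun a => |a|)) < 1) :
    ∀ b x y : Fin n → ℝ,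
      A.mulVec x - absv x = b → A.mulVec y - absv y = b → x = y := by
  intro b x y hx hy
  have habsv (z : Fin n → ℝ) : absv z = |z| := funext fun i => (Pi.abs_apply z i).symm
  rw [habsv] at hx hy
  have hle := abs_sub_le_of_mulVec_sub_abs_eq hA (hx.trans hy.symm)
  have hnonpos := nonpos_of_le_mulVec (fun _ _ => abs_nonneg _)
    (tendsto_pow_atTop_nhds_zero_of_specRad_lt_one _ h) hle
  exact sub_eq_zero.1 ((Pi.abs_eq_zero _).1 (le_antisymm hnonpos (abs_nonneg _)))
end

section
/- The generalized absolute value equation Ax - B|x| = b has a unique solution for every b ∈ ℝ^n if and only if the matrix A - B D is nonsingular for every diagonal matrix D with diagonal entries in [-1, 1]. -/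
open Matrix

/-! ### Auxiliary material for `stmt10` -/

/-- The homotopy map `x ↦ A x - t • B |x|`. -/
noncomputable def AVEf {n : ℕ} (A B : Matrix (Fin n) (Fin n) ℝ) (t : ℝ) (x : Fin n → ℝ) :
    Fin n → ℝ := A.mulVec x - t • B.mulVec (absv x)

private lemma absv_sub_eq {n : ℕ} (x y : Fin n → ℝ) :
    ∃ d : Fin n → ℝ, (∀ i, d i ∈ Set.Icc (-1:ℝ) 1) ∧
      absv x - absv y = (Matrix.diagonal d).mulVec (x - y) := by
  refine ⟨fun i => if x i = y i then 0 else (|x i| - |y i|)/(x i - y i), fun i => ?_, ?_⟩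
  · rw [Set.mem_Icc, ← abs_le]
    simp only []
    by_cases h : x i = y i
    · simp [h]
    · rw [if_neg h, abs_div, div_le_one (abs_pos.mpr (sub_ne_zero.mpr h))]
      exact abs_abs_sub_abs_le_abs_sub _ _
  · funext i
    rw [Pi.sub_apply, Matrix.mulVec_diagonal]
    by_cases h : x i = y i
    · simp [absv, h]
    · rw [if_neg h, Pi.sub_apply]
      show |x i| - |y i| = _
      rw [div_mul_cancel₀ _ (sub_ne_zero.mpr h)]

private lemma absv_lip {n : ℕ} (x y : Fin n → ℝ) : ‖absv x - absv y‖ ≤ ‖x - y‖ := by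
  rcases Nat.eq_zero_or_pos n with rfl | hn
  · simp [absv]
  · have : Nonempty (Fin n) := ⟨⟨0, hn⟩⟩
    apply pi_norm_le_iff_of_nonneg (norm_nonneg _) |>.mpr
    intro i
    calc ‖(absv x - absv y) i‖ = |(|x i| - |y i|)| := by simp [absv, Real.norm_eq_abs]
      _ ≤ |x i - y i| := abs_abs_sub_abs_le_abs_sub _ _
      _ = ‖(x - y) i‖ := by simp [Real.norm_eq_abs]
      _ ≤ ‖x - y‖ := norm_le_pi_norm _ i

/-- Key algebraic identity: the difference of the homotopy map at two points is a matrix from the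
interval family applied to the difference. -/
private lemma AVEf_sub {n : ℕ} (A B : Matrix (Fin n) (Fin n) ℝ) (t : ℝ)
    (ht : t ∈ Set.Icc (0:ℝ) 1) (x y : Fin n → ℝ) :
    ∃ d : Fin n → ℝ, (∀ i, d i ∈ Set.Icc (-1:ℝ) 1) ∧
      AVEf A B t x - AVEf A B t y = (A - B * Matrix.diagonal d).mulVec (x - y) := by
  obtain ⟨d, hd, hdeq⟩ := absv_sub_eq x y
  refine ⟨t • d, fun i => ?_, ?_⟩
  · obtain ⟨h1, h2⟩ := hd i
    obtain ⟨ht0, ht1⟩ := ht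
    constructor
    · simp only [Pi.smul_apply, smul_eq_mul]
      nlinarith
    · simp only [Pi.smul_apply, smul_eq_mul]
      nlinarith
  · have hds : Matrix.diagonal (t • d) = t • Matrix.diagonal d := by
      rw [Matrix.diagonal_smul]
    rw [Matrix.sub_mulVec, hds, Matrix.mul_smul, Matrix.smul_mulVec,
      ← Matrix.mulVec_mulVec, ← hdeq]
    show A.mulVec x - t • B.mulVec (absv x) - (A.mulVec y - t • B.mulVec (absv y)) = _
    rw [Matrix.mulVec_sub, Matrix.mulVec_sub, smul_sub]
    abel

private lemma exists_expansive_const {n : ℕ} (hn : 0 < n) (A B : Matrix (Fin n) (Fin n) ℝ)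
    (H : ∀ d : Fin n → ℝ, (∀ i, d i ∈ Set.Icc (-1:ℝ) 1) → (A - B * Matrix.diagonal d).det ≠ 0) :
    ∃ c > 0, ∀ d : Fin n → ℝ, (∀ i, d i ∈ Set.Icc (-1:ℝ) 1) → ∀ u : Fin n → ℝ,
      c * ‖u‖ ≤ ‖(A - B * Matrix.diagonal d).mulVec u‖ := by
  have : Nonempty (Fin n) := ⟨⟨0, hn⟩⟩
  set K : Set (Fin n → ℝ) := Set.univ.pi (fun _ => Set.Icc (-1:ℝ) 1) with hKdef
  set S : Set (Fin n → ℝ) := Metric.sphere 0 1 with hSdef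
  have hKS : IsCompact (K ×ˢ S) :=
    (isCompact_univ_pi fun _ => isCompact_Icc).prod (isCompact_sphere 0 1)
  have hne : (K ×ˢ S).Nonempty := by
    refine ⟨(0, fun _ => (1:ℝ)), Set.mem_prod.mpr ⟨?_, ?_⟩⟩
    · intro i _; exact ⟨by norm_num, by norm_num⟩
    · rw [hSdef, mem_sphere_zero_iff_norm, pi_norm_const]
      norm_num
  have hcont : Continuous fun p : (Fin n → ℝ) × (Fin n → ℝ) =>
      ‖(A - B * Matrix.diagonal p.1).mulVec p.2‖ :=
    (((continuous_const.sub
        (continuous_const.matrix_mul continuous_fst.matrix_diagonal)).matrix_mulVec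
        continuous_snd)).norm
  obtain ⟨p0, hp0, hmin'⟩ := hKS.exists_isMinOn hne hcont.continuousOn
  have hmin := isMinOn_iff.mp hmin'
  set c := ‖(A - B * Matrix.diagonal p0.1).mulVec p0.2‖ with hcdef
  have hp01 : ∀ i, p0.1 i ∈ Set.Icc (-1:ℝ) 1 := fun i => (Set.mem_prod.mp hp0).1 i trivial
  have hp02 : ‖p0.2‖ = 1 := mem_sphere_zero_iff_norm.mp (Set.mem_prod.mp hp0).2
  have hcpos : 0 < c := by
    rcases lt_or_eq_of_le (norm_nonneg ((A - B * Matrix.diagonal p0.1).mulVec p0.2)) with h | h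
    · exact h
    · exfalso
      apply H p0.1 hp01
      rw [← Matrix.exists_mulVec_eq_zero_iff]
      refine ⟨p0.2, fun h0 => by simp [h0] at hp02, ?_⟩
      rw [← norm_eq_zero]; exact h.symm
  refine ⟨c, hcpos, fun d hd u => ?_⟩
  rcases eq_or_ne u 0 with rfl | hu
  · simp
  · have hru : (0:ℝ) < ‖u‖ := norm_pos_iff.mpr hu
    set w : Fin n → ℝ := ‖u‖⁻¹ • u with hwdef
    have hw : w ∈ S := by
      rw [hSdef, mem_sphere_zero_iff_norm, hwdef, norm_smul, norm_inv, norm_norm,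
        inv_mul_cancel₀ hru.ne']
    have hdK : d ∈ K := fun i _ => hd i
    have h1 : c ≤ ‖(A - B * Matrix.diagonal d).mulVec w‖ := hmin (d, w) ⟨hdK, hw⟩
    have h2 : (A - B * Matrix.diagonal d).mulVec u
        = ‖u‖ • (A - B * Matrix.diagonal d).mulVec w := by
      rw [hwdef, Matrix.mulVec_smul, smul_smul, mul_inv_cancel₀ hru.ne', one_smul]
    calc c * ‖u‖ ≤ ‖(A - B * Matrix.diagonal d).mulVec w‖ * ‖u‖ :=
          mul_le_mul_of_nonneg_right h1 hru.le
      _ = ‖(A - B * Matrix.diagonal d).mulVec u‖ := by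
          rw [h2, norm_smul, norm_norm, mul_comm]

private lemma surj_step {n : ℕ} (A B : Matrix (Fin n) (Fin n) ℝ) {c L : ℝ} (hc : 0 < c)
    (hL0 : 0 ≤ L) (hL : ∀ v, ‖B.mulVec v‖ ≤ L * ‖v‖)
    (hexp : ∀ t ∈ Set.Icc (0:ℝ) 1, ∀ x y : Fin n → ℝ,
      c * ‖x - y‖ ≤ ‖AVEf A B t x - AVEf A B t y‖)
    {t t' : ℝ} (ht : t ∈ Set.Icc (0:ℝ) 1) (htt : |t' - t| * L ≤ c / 2)
    (hsurj : Function.Surjective (AVEf A B t)) : Function.Surjective (AVEf A B t') := by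
  intro b
  set h := Function.surjInv hsurj with hhdef
  have hh : ∀ z, AVEf A B t (h z) = z := fun z => Function.surjInv_eq hsurj z
  set g : (Fin n → ℝ) → Fin n → ℝ := fun x => h (b + (t' - t) • B.mulVec (absv x)) with hgdef
  have hge : ∀ x, AVEf A B t (g x) = b + (t' - t) • B.mulVec (absv x) := fun x => hh _
  have hlip : LipschitzWith (1/2 : NNReal) g := by
    apply LipschitzWith.of_dist_le_mul
    intro x y
    rw [dist_eq_norm, dist_eq_norm]
    have h1 := hexp t ht (g x) (g y)
    rw [hge x, hge y, add_sub_add_left_eq_sub, ← smul_sub, norm_smul,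
      Real.norm_eq_abs] at h1
    have h3 : ‖B.mulVec (absv x) - B.mulVec (absv y)‖ ≤ L * ‖x - y‖ := by
      rw [← Matrix.mulVec_sub]
      calc ‖B.mulVec (absv x - absv y)‖ ≤ L * ‖absv x - absv y‖ := hL _
        _ ≤ L * ‖x - y‖ := mul_le_mul_of_nonneg_left (absv_lip x y) hL0
    have h4 : |t' - t| * ‖B.mulVec (absv x) - B.mulVec (absv y)‖
        ≤ (c/2) * ‖x - y‖ := by
      calc |t' - t| * ‖B.mulVec (absv x) - B.mulVec (absv y)‖
          ≤ |t' - t| * (L * ‖x - y‖) :=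
            mul_le_mul_of_nonneg_left h3 (abs_nonneg _)
        _ = (|t' - t| * L) * ‖x - y‖ := by ring
        _ ≤ (c/2) * ‖x - y‖ := mul_le_mul_of_nonneg_right htt (norm_nonneg _)
    have h5 : c * ‖g x - g y‖ ≤ (c/2) * ‖x - y‖ := le_trans h1 h4
    have hco : ((1/2 : NNReal) : ℝ) = 1/2 := by norm_num
    rw [hco]
    nlinarith [norm_nonneg (g x - g y)]
  have hcon : ContractingWith (1/2 : NNReal) g := ⟨by rw [← NNReal.coe_lt_coe]; norm_num, hlip⟩
  obtain ⟨x, hx, -⟩ := hcon.exists_fixedPoint 0 (edist_ne_top _ _)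
  refine ⟨x, ?_⟩
  have hfx : AVEf A B t x = b + (t' - t) • B.mulVec (absv x) := by
    conv_lhs => rw [← hx]
    exact hge x
  show A.mulVec x - t' • B.mulVec (absv x) = b
  have key : (t' : ℝ) • B.mulVec (absv x)
      = t • B.mulVec (absv x) + (t' - t) • B.mulVec (absv x) := by
    rw [← add_smul]; ring_nf
  calc A.mulVec x - t' • B.mulVec (absv x)
      = (A.mulVec x - t • B.mulVec (absv x)) - (t' - t) • B.mulVec (absv x) := by
        rw [key]; abel
    _ = b := by rw [show A.mulVec x - t • B.mulVec (absv x) = AVEf A B t x from rfl, hfx]; abel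

/-- Existence and uniqueness, assuming all matrices in the interval family are nonsingular. -/
private lemma existsUnique_of_dets {n : ℕ} (hn : 0 < n) (A B : Matrix (Fin n) (Fin n) ℝ)
    (H : ∀ d : Fin n → ℝ, (∀ i, d i ∈ Set.Icc (-1:ℝ) 1) → (A - B * Matrix.diagonal d).det ≠ 0)
    (b : Fin n → ℝ) : ∃! x : Fin n → ℝ, A.mulVec x - B.mulVec (absv x) = b := by
  obtain ⟨c, hc, hcle⟩ := exists_expansive_const hn A B H
  have hexp : ∀ t ∈ Set.Icc (0:ℝ) 1, ∀ x y : Fin n → ℝ,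
      c * ‖x - y‖ ≤ ‖AVEf A B t x - AVEf A B t y‖ := by
    intro t ht x y
    obtain ⟨d, hd, he⟩ := AVEf_sub A B t ht x y
    rw [he]
    exact hcle d hd (x - y)
  -- Lipschitz constant for `B.mulVec`
  set T := LinearMap.toContinuousLinearMap (Matrix.mulVecLin B) with hTdef
  set L := ‖T‖ with hLdef
  have hL0 : 0 ≤ L := norm_nonneg _
  have hL : ∀ v, ‖B.mulVec v‖ ≤ L * ‖v‖ := fun v => T.le_opNorm v
  -- step size
  set ε := c / (2 * (L + 1)) with hεdef
  have hε : 0 < ε := by positivity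
  have hstep : ∀ t ∈ Set.Icc (0:ℝ) 1, ∀ t' ∈ Set.Icc (0:ℝ) 1, |t' - t| ≤ ε →
      Function.Surjective (AVEf A B t) → Function.Surjective (AVEf A B t') := by
    intro t ht t' ht' htt hs
    refine surj_step A B hc hL0 hL hexp ht ?_ hs
    have h1 : |t' - t| * L ≤ ε * L := mul_le_mul_of_nonneg_right htt hL0
    have h2 : ε * L ≤ c / 2 := by
      rw [hεdef, div_mul_eq_mul_div, div_le_div_iff₀ (by positivity) (by norm_num)]
      nlinarith
    linarith
  have base : Function.Surjective (AVEf A B 0) := by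
    have hdet : A.det ≠ 0 := by
      have h0 := H 0 (fun i => by norm_num)
      have e : Matrix.diagonal (0 : Fin n → ℝ) = 0 := by
        ext i j; simp [Matrix.diagonal_apply]
      rwa [e, mul_zero, sub_zero] at h0
    intro b'
    refine ⟨A⁻¹.mulVec b', ?_⟩
    show A.mulVec (A⁻¹.mulVec b') - (0:ℝ) • B.mulVec _ = b'
    rw [zero_smul, sub_zero, Matrix.mulVec_mulVec,
      Matrix.mul_nonsing_inv _ (isUnit_iff_ne_zero.mpr hdet), Matrix.one_mulVec]
  have main : ∀ k : ℕ, ∀ t, t ∈ Set.Icc (0:ℝ) 1 → t ≤ k * ε →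
      Function.Surjective (AVEf A B t) := by
    intro k
    induction k with
    | zero =>
      intro t ht h0
      have ht0 : t = 0 := le_antisymm (by simpa using h0) ht.1
      rwa [ht0]
    | succ k ih =>
      intro t ht hk
      by_cases htk : t ≤ k * ε
      · exact ih t ht htk
      · push_neg at htk
        set t0 := max (t - ε) 0 with ht0def
        have ht00 : (0:ℝ) ≤ t0 := le_max_right _ _
        have ht0t : t0 ≤ t := max_le (by linarith) ht.1
        have ht0I : t0 ∈ Set.Icc (0:ℝ) 1 := ⟨ht00, le_trans ht0t ht.2⟩
        have ht0k : t0 ≤ k * ε := by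
          apply max_le
          · push_cast at hk
            linarith
          · positivity
        have hd : |t - t0| ≤ ε := by
          rw [abs_of_nonneg (by linarith)]
          have : t - ε ≤ t0 := le_max_left _ _
          linarith
        exact hstep t0 ht0I t ht hd (ih t0 ht0I ht0k)
  have hs1 : Function.Surjective (AVEf A B 1) := by
    obtain ⟨k, hk⟩ := exists_nat_ge (1/ε)
    have h1k : (1:ℝ) ≤ k * ε := by
      rw [div_le_iff₀ hε] at hk
      linarith
    exact main k 1 ⟨zero_le_one, le_refl 1⟩ h1k
  obtain ⟨x, hx⟩ := hs1 b
  have hx' : A.mulVec x - B.mulVec (absv x) = b := by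
    have : AVEf A B 1 x = A.mulVec x - B.mulVec (absv x) := by
      show A.mulVec x - (1:ℝ) • B.mulVec (absv x) = _
      rw [one_smul]
    rwa [this] at hx
  refine ⟨x, hx', fun y hy => ?_⟩
  have hexp1 := hexp 1 ⟨zero_le_one, le_refl 1⟩ y x
  have hfy : AVEf A B 1 y = b := by
    show A.mulVec y - (1:ℝ) • B.mulVec (absv y) = b
    rw [one_smul]; exact hy
  have hfx : AVEf A B 1 x = b := by
    show A.mulVec x - (1:ℝ) • B.mulVec (absv x) = b
    rw [one_smul]; exact hx'
  rw [hfy, hfx, sub_self, norm_zero] at hexp1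
  have : ‖y - x‖ ≤ 0 := by nlinarith [norm_nonneg (y - x)]
  have h0 : y - x = 0 := norm_le_zero_iff.mp this
  have := sub_eq_zero.mp h0
  exact this

theorem stmt10 {n : ℕ} (A B : Matrix (Fin n) (Fin n) ℝ) :
    (∀ b : Fin n → ℝ, ∃! x : Fin n → ℝ, A.mulVec x - B.mulVec (absv x) = b) ↔
      (∀ d : Fin n → ℝ, (∀ i, d i ∈ Set.Icc (-1 : ℝ) 1) →
        (A - B * Matrix.diagonal d).det ≠ 0) := by
  constructor
  · intro hU d hd
    intro hdet
    obtain ⟨v, hv0, hv⟩ := (Matrix.exists_mulVec_eq_zero_iff).mpr hdet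
    -- construct two distinct solutions
    obtain ⟨x, hxdef⟩ : ∃ x' : Fin n → ℝ, x' = fun i => (v i + d i * |v i|) / 2 := ⟨_, rfl⟩
    obtain ⟨y, hydef⟩ : ∃ y' : Fin n → ℝ, y' = x - v := ⟨_, rfl⟩
    have hxy : x - y = v := by rw [hydef]; abel
    have habs : absv x - absv y = (Matrix.diagonal d).mulVec v := by
      funext i
      rw [Matrix.mulVec_diagonal, Pi.sub_apply]
      show |x i| - |y i| = d i * v i
      have hyi : y i = (d i * |v i| - v i) / 2 := by
        rw [hydef, Pi.sub_apply, hxdef]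
        ring
      obtain ⟨hd1, hd2⟩ := hd i
      rcases le_or_gt 0 (v i) with hvi | hvi
      · have hav : |v i| = v i := abs_of_nonneg hvi
        have hx0 : 0 ≤ x i := by rw [hxdef]; simp only []; rw [hav]; nlinarith
        have hy0 : y i ≤ 0 := by rw [hyi, hav]; nlinarith
        rw [abs_of_nonneg hx0, abs_of_nonpos hy0, hyi, hxdef]
        simp only []
        rw [hav]
        ring
      · have hav : |v i| = -v i := abs_of_neg hvi
        have hx0 : x i ≤ 0 := by rw [hxdef]; simp only []; rw [hav]; nlinarith
        have hy0 : 0 ≤ y i := by rw [hyi, hav]; nlinarith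
        rw [abs_of_nonpos hx0, abs_of_nonneg hy0, hyi, hxdef]
        simp only []
        rw [hav]
        ring
    have heq : A.mulVec x - B.mulVec (absv x) = A.mulVec y - B.mulVec (absv y) := by
      rw [← sub_eq_zero]
      calc A.mulVec x - B.mulVec (absv x) - (A.mulVec y - B.mulVec (absv y))
          = A.mulVec (x - y) - B.mulVec (absv x - absv y) := by
            rw [Matrix.mulVec_sub, Matrix.mulVec_sub]; abel
        _ = A.mulVec v - B.mulVec ((Matrix.diagonal d).mulVec v) := by rw [hxy, habs]
        _ = (A - B * Matrix.diagonal d).mulVec v := by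
            rw [Matrix.sub_mulVec, Matrix.mulVec_mulVec]
        _ = 0 := hv
    obtain ⟨z, hz, huniq⟩ := hU (A.mulVec x - B.mulVec (absv x))
    have hxz : x = z := huniq x rfl
    have hyz : y = z := huniq y heq.symm
    apply hv0
    rw [← hxy, hxz, hyz, sub_self]
  · intro H b
    rcases Nat.eq_zero_or_pos n with rfl | hn
    · exact ⟨0, Subsingleton.elim _ _, fun y _ => Subsingleton.elim _ _⟩
    · exact existsUnique_of_dets hn A B H b
end

section
/- If A is invertible and ρ(A^{-1} B D) < 1 for every diagonal matrix D with diagonal entries in [-1, 1], then the generalized absolute value equation Ax - B|x| = b has at most one solution for every b ∈ ℝ^n. -/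
open Matrix

/-- If a real matrix has a real eigenvector with eigenvalue 1, its spectral radius is ≥ 1. -/
lemma one_le_specRad_of_fixed {n : ℕ} (M : Matrix (Fin n) (Fin n) ℝ) (z : Fin n → ℝ)
    (hz : z ≠ 0) (hMz : M.mulVec z = z) : (1 : ENNReal) ≤ specRad M := by
  set Mc : Matrix (Fin n) (Fin n) ℂ := M.map (Complex.ofReal ·)
  set zc : Fin n → ℂ := fun i => (z i : ℂ)
  have hzc : zc ≠ 0 := by
    intro hc
    apply hz
    funext i
    have := congrFun hc i
    simpa [zc] using this
  have hMczc : Mc.mulVec zc = zc := by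
    funext i
    have := (Complex.ofRealHom.map_mulVec M z i).symm
    rw [show (Mc.mulVec zc) i = (M.map Complex.ofRealHom *ᵥ (Complex.ofRealHom ∘ z)) i by rfl,
      this, hMz]
    rfl
  have h1 : (1 : ℂ) ∈ spectrum ℂ Mc := by
    rw [spectrum.mem_iff]
    intro hu
    rw [Matrix.isUnit_iff_isUnit_det] at hu
    have hdet : (algebraMap ℂ (Matrix (Fin n) (Fin n) ℂ) 1 - Mc).det = 0 := by
      rw [← Matrix.exists_mulVec_eq_zero_iff]
      refine ⟨zc, hzc, ?_⟩
      rw [Matrix.sub_mulVec, hMczc]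
      simp [Algebra.algebraMap_eq_smul_one]
    rw [hdet] at hu
    exact hu.ne_zero rfl
  calc (1 : ENNReal) = ‖(1 : ℂ)‖₊ := by simp
    _ ≤ spectralRadius ℂ Mc := le_iSup₂ (f := fun k (_ : k ∈ spectrum ℂ Mc) => (‖k‖₊ : ENNReal)) (1 : ℂ) h1

theorem stmt11 {n : ℕ} (A B : Matrix (Fin n) (Fin n) ℝ) (hA : IsUnit A.det)
    (h : ∀ d : Fin n → ℝ, (∀ i, d i ∈ Set.Icc (-1 : ℝ) 1) →
      specRad (A⁻¹ * B * Matrix.diagonal d) < 1) :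
    ∀ b x y : Fin n → ℝ,
      A.mulVec x - B.mulVec (absv x) = b → A.mulVec y - B.mulVec (absv y) = b → x = y := by
  intro b x y hx hy
  by_contra hne
  set z : Fin n → ℝ := x - y with hzdef
  have hz : z ≠ 0 := sub_ne_zero.mpr hne
  -- define d
  set d : Fin n → ℝ := fun i => if x i = y i then 0 else (|x i| - |y i|) / (x i - y i) with hd
  have hdmem : ∀ i, d i ∈ Set.Icc (-1 : ℝ) 1 := by
    intro i
    rw [Set.mem_Icc, ← abs_le]
    by_cases hxy : x i = y i
    · simp [hd, hxy]
    · have hsub : x i - y i ≠ 0 := sub_ne_zero.mpr hxy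
      simp only [hd, hxy, if_false]
      rw [abs_div, div_le_one (abs_pos.mpr hsub)]
      exact abs_abs_sub_abs_le_abs_sub _ _
  have hdz : (Matrix.diagonal d).mulVec z = absv x - absv y := by
    funext i
    rw [Matrix.mulVec_diagonal]
    by_cases hxy : x i = y i
    · simp [hd, hxy, absv, Pi.sub_apply]
    · have hsub : x i - y i ≠ 0 := sub_ne_zero.mpr hxy
      simp only [hd, hxy, if_false, hzdef, Pi.sub_apply, absv]
      field_simp
  -- A z = B (|x| - |y|)
  have hAz : A.mulVec z = B.mulVec (absv x - absv y) := by
    have := sub_eq_sub_iff_sub_eq_sub.mp (hx.trans hy.symm)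
    rw [← Matrix.mulVec_sub, ← Matrix.mulVec_sub] at this
    exact this
  have key : (A⁻¹ * B * Matrix.diagonal d).mulVec z = z := by
    rw [Matrix.mul_assoc, ← Matrix.mulVec_mulVec, ← Matrix.mulVec_mulVec, hdz, ← hAz,
      Matrix.mulVec_mulVec, Matrix.nonsing_inv_mul A hA, Matrix.one_mulVec]
  exact absurd (h d hdmem) (not_lt.mpr (one_le_specRad_of_fixed _ z hz key))
end

section
/- For A ∈ ℝ^{n×n}, the solution set of Ax - |x| = b is finite for every b ∈ ℝ^n if and only if A + diag(s) is nonsingular for every sign vector s ∈ {±1}^n. -/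
open Matrix

theorem stmt16 {n : ℕ} (A : Matrix (Fin n) (Fin n) ℝ) :
    (∀ b : Fin n → ℝ, {x : Fin n → ℝ | A.mulVec x - absv x = b}.Finite) ↔
      (∀ s : Fin n → ℝ, (∀ i, s i = 1 ∨ s i = -1) →
        (A + Matrix.diagonal s).det ≠ 0) := by
  constructor
  · intro h s hs
    by_contra hdet
    obtain ⟨v, hv, hmv⟩ := (Matrix.exists_mulVec_eq_zero_iff).2 hdet
    set M := A + Matrix.diagonal s with hM
    set S : ℝ := ∑ i, |v i| with hS
    have hSnn : 0 ≤ S := Finset.sum_nonneg fun i _ => abs_nonneg _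
    set ε : ℝ := (1 + S)⁻¹ with hε
    have hεpos : 0 < ε := inv_pos.2 (by linarith)
    have habs : ∀ i, |v i| ≤ S := fun i =>
      Finset.single_le_sum (f := fun i => |v i|) (fun j _ => abs_nonneg _) (Finset.mem_univ i)
    set y : Fin n → ℝ := fun i => -(s i) with hy
    set b : Fin n → ℝ := M.mulVec y with hb
    have key : ∀ t ∈ Set.Icc (0:ℝ) ε, (y + t • v) ∈ {x | A.mulVec x - absv x = b} := by
      intro t ht
      have habsv : absv (y + t • v) = fun i => -(s i * (y + t • v) i) := by
        funext i
        have hsi := hs i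
        have hs1 : |s i| = 1 := by rcases hsi with h1 | h1 <;> simp [h1]
        have hsq : s i * s i = 1 := by rcases hsi with h1 | h1 <;> simp [h1] <;> ring
        have h1 : t * |v i| ≤ 1 := by
          have h2 : t * |v i| ≤ ε * S :=
            mul_le_mul ht.2 (habs i) (abs_nonneg _) (le_of_lt hεpos)
          have h3 : ε * S ≤ 1 := by
            rw [hε, inv_mul_le_iff₀ (by linarith)]
            linarith
          linarith
        have hle : s i * (y + t • v) i ≤ 0 := by
          have hv1 : s i * v i ≤ |v i| := by
            calc s i * v i ≤ |s i * v i| := le_abs_self _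
            _ = |v i| := by rw [abs_mul, hs1, one_mul]
          have : s i * (y + t • v) i = -1 + t * (s i * v i) := by
            have hsq2 : s i ^ 2 = 1 := by rw [sq, hsq]
            simp [hy, Pi.add_apply, Pi.smul_apply, smul_eq_mul]
            ring_nf
            rw [hsq2]
            ring
          rw [this]
          have : t * (s i * v i) ≤ t * |v i| :=
            mul_le_mul_of_nonneg_left hv1 ht.1
          linarith
        show |(y + t • v) i| = -(s i * (y + t • v) i)
        calc |(y + t • v) i| = |s i| * |(y + t • v) i| := by rw [hs1, one_mul]
        _ = |s i * (y + t • v) i| := (abs_mul _ _).symm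
        _ = -(s i * (y + t • v) i) := abs_of_nonpos hle
      show A.mulVec (y + t • v) - absv (y + t • v) = b
      have : A.mulVec (y + t • v) - absv (y + t • v) = M.mulVec (y + t • v) := by
        funext i
        simp only [hM, Matrix.add_mulVec, Pi.sub_apply, Pi.add_apply, habsv,
          Matrix.mulVec_diagonal]
        ring
      rw [this, Matrix.mulVec_add, Matrix.mulVec_smul, hmv, smul_zero, add_zero]
    obtain ⟨i, hvi⟩ : ∃ i, v i ≠ 0 := by
      by_contra hc
      push_neg at hc
      exact hv (funext hc)
    have hinj : Set.InjOn (fun t : ℝ => y + t • v) (Set.Icc 0 ε) := by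
      intro a _ c _ hac
      have := congrFun hac i
      simp only [Pi.add_apply, Pi.smul_apply, smul_eq_mul] at this
      have : a * v i = c * v i := by linarith
      exact mul_right_cancel₀ hvi this
    have hinf : {x : Fin n → ℝ | A.mulVec x - absv x = b}.Infinite :=
      Set.Infinite.mono (by rintro x ⟨t, ht, rfl⟩; exact key t ht)
        ((Set.Icc_infinite hεpos).image hinj)
    exact hinf (h b)
  · intro h b
    classical
    have hinj : Set.InjOn (fun x : Fin n → ℝ => fun i => decide (0 ≤ x i))
        {x : Fin n → ℝ | A.mulVec x - absv x = b} := by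
      intro x hx x' hx' hxx
      set s : Fin n → ℝ := fun i => if 0 ≤ x i then 1 else -1 with hsdef
      have hs : ∀ i, s i = 1 ∨ s i = -1 := by
        intro i; by_cases h0 : 0 ≤ x i <;> simp [hsdef, h0]
      have hdet : (A - Matrix.diagonal s).det ≠ 0 := by
        have := h (fun i => -(s i)) (fun i => by rcases hs i with h1 | h1 <;> simp [h1])
        have heq : A + Matrix.diagonal (fun i => -(s i)) = A - Matrix.diagonal s := by
          rw [sub_eq_add_neg, ← Matrix.diagonal_neg]
        rwa [heq] at this
      have key : ∀ z : Fin n → ℝ, z ∈ {x : Fin n → ℝ | A.mulVec x - absv x = b} →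
          (∀ i, (decide (0 ≤ z i)) = (decide (0 ≤ x i))) →
          (A - Matrix.diagonal s).mulVec z = b := by
        intro z hz hsz
        have : (A - Matrix.diagonal s).mulVec z = A.mulVec z - absv z := by
          funext i
          simp only [Matrix.sub_mulVec, Pi.sub_apply, Matrix.mulVec_diagonal]
          congr 1
          show s i * z i = |z i|
          by_cases h0 : 0 ≤ x i
          · have h0z : 0 ≤ z i := of_decide_eq_true (by rw [hsz i]; exact decide_eq_true h0)
            simp [hsdef, h0, abs_of_nonneg h0z]
          · have h0z : ¬ (0 ≤ z i) := by
              intro hc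
              exact h0 (of_decide_eq_true (by rw [← hsz i]; exact decide_eq_true hc))
            push_neg at h0z
            simp [hsdef, h0, abs_of_neg h0z]
        rw [this, hz]
      have hx1 : (A - Matrix.diagonal s).mulVec x = b := key x hx fun i => rfl
      have hx2 : (A - Matrix.diagonal s).mulVec x' = b := key x' hx' fun i => (congrFun hxx i).symm
      by_contra hne
      have : x - x' ≠ 0 := sub_ne_zero.2 hne
      have h0 : (A - Matrix.diagonal s).mulVec (x - x') = 0 := by
        rw [Matrix.mulVec_sub, hx1, hx2, sub_self]
      exact hdet (Matrix.exists_mulVec_eq_zero_iff.1 ⟨x - x', this, h0⟩)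
    exact Set.Finite.of_finite_image (Set.toFinite _) hinj
end

section
/- If B ≥ 0 entrywise with ρ(B) < 1, M = (I - B)^{-1}, and there is an index k such that b_i ≥ 0 for all i ≠ k, then x = max{Mb, Mb - (2(Mb)_k / (2M_{kk} - 1))(M - I)e_k} (componentwise maximum) is the unique solution of x - B|x| = b. -/
open Matrix

section Aux

attribute [local instance] Matrix.linftyOpNormedAddCommGroup Matrix.linftyOpNormedRing
  Matrix.linftyOpNormedAlgebra

private lemma entry_nnnorm_le {n : ℕ} (A : Matrix (Fin n) (Fin n) ℂ) (i j : Fin n) :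
    ‖A i j‖₊ ≤ ‖A‖₊ := by
  rw [Matrix.linfty_opNNNorm_def]
  refine le_trans ?_ (Finset.le_sup (Finset.mem_univ i))
  exact Finset.single_le_sum (f := fun j' => ‖A i j'‖₊) (fun j _ => zero_le) (Finset.mem_univ j)

private lemma geom_bound {n : ℕ} (B : Matrix (Fin n) (Fin n) ℝ) (hρ : specRad B < 1) :
    ∃ r : ℝ, 0 ≤ r ∧ r < 1 ∧ ∃ N : ℕ, ∀ m, N ≤ m → ∀ i j, |(B ^ m) i j| ≤ r ^ m := by
  set A := B.map (Complex.ofReal ·) with hA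
  obtain ⟨r, hρr, hr1⟩ := ENNReal.lt_iff_exists_nnreal_btwn.mp hρ
  have hT := spectrum.pow_nnnorm_pow_one_div_tendsto_nhds_spectralRadius A
  have hev : ∀ᶠ m : ℕ in Filter.atTop, (‖A ^ m‖₊ : ENNReal) ^ (1 / (m : ℝ)) < r :=
    hT.eventually_lt_const hρr
  obtain ⟨N, hN⟩ := Filter.eventually_atTop.mp hev
  refine ⟨r, r.coe_nonneg, by exact_mod_cast hr1, max N 1, fun m hm i j => ?_⟩
  have hm1 : 1 ≤ m := le_trans (le_max_right N 1) hm
  have hmN : N ≤ m := le_trans (le_max_left N 1) hm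
  have h1 : (‖A ^ m‖₊ : ENNReal) ^ (1 / (m : ℝ)) < r := hN m hmN
  have hm0 : (m : ℝ) ≠ 0 := by positivity
  have h2 : (‖A ^ m‖₊ : ENNReal) ≤ (r : ENNReal) ^ (m : ℝ) := by
    have := ENNReal.rpow_le_rpow h1.le (le_of_lt (by positivity : (0:ℝ) < (m:ℝ)))
    rwa [← ENNReal.rpow_mul, one_div, inv_mul_cancel₀ hm0, ENNReal.rpow_one] at this
  have h3 : ‖A ^ m‖₊ ≤ r ^ m := by
    have h : ((r : ENNReal)) ^ (m : ℝ) = ((r ^ m : NNReal) : ENNReal) := by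
      rw [ENNReal.rpow_natCast, ENNReal.coe_pow]
    rw [h] at h2
    exact_mod_cast h2
  have h4 : ‖A ^ m‖ ≤ (r : ℝ) ^ m := by exact_mod_cast h3
  have hAm : A ^ m = (B ^ m).map (Complex.ofReal ·) := by
    rw [hA]
    change (Complex.ofRealHom.mapMatrix B) ^ m = Complex.ofRealHom.mapMatrix (B ^ m)
    rw [map_pow]
  calc |(B ^ m) i j| = ‖(A ^ m) i j‖ := by rw [hAm]; simp [Matrix.map_apply, Complex.norm_real]
    _ ≤ ‖A ^ m‖ := entry_nnnorm_le (A ^ m) i j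
    _ ≤ (r : ℝ) ^ m := h4

end Aux

section Neumann
variable {n : ℕ}

private lemma pow_entry_nonneg {C : Matrix (Fin n) (Fin n) ℝ} (hC : ∀ i j, 0 ≤ C i j) (m : ℕ) :
    ∀ i j, 0 ≤ (C ^ m) i j := by
  induction m with
  | zero => intro i j; rw [pow_zero]; by_cases h : i = j <;> simp [Matrix.one_apply, h]
  | succ m ih =>
    intro i j
    rw [pow_succ, Matrix.mul_apply]
    exact Finset.sum_nonneg fun l _ => mul_nonneg (ih i l) (hC l j)

private lemma pow_entry_mono {C B : Matrix (Fin n) (Fin n) ℝ} (hC : ∀ i j, 0 ≤ C i j)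
    (hCB : ∀ i j, C i j ≤ B i j) (m : ℕ) : ∀ i j, (C ^ m) i j ≤ (B ^ m) i j := by
  induction m with
  | zero => intro i j; rw [pow_zero, pow_zero]
  | succ m ih =>
    intro i j
    rw [pow_succ, pow_succ, Matrix.mul_apply, Matrix.mul_apply]
    refine Finset.sum_le_sum fun l _ => ?_
    exact mul_le_mul (ih i l) (hCB l j) (hC l j)
      (pow_entry_nonneg (fun i j => le_trans (hC i j) (hCB i j)) m i l)

private lemma summable_pow_entry {B C : Matrix (Fin n) (Fin n) ℝ} {r : ℝ} {N : ℕ}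
    (hr0 : 0 ≤ r) (hr1 : r < 1) (hgb : ∀ m, N ≤ m → ∀ i j, |(B ^ m) i j| ≤ r ^ m)
    (hC : ∀ i j, 0 ≤ C i j) (hCB : ∀ i j, C i j ≤ B i j) (i j : Fin n) :
    Summable fun m => (C ^ m) i j := by
  rw [← summable_nat_add_iff N]
  refine Summable.of_nonneg_of_le (fun m => pow_entry_nonneg hC _ i j) (fun m => ?_)
    (((summable_geometric_of_lt_one hr0 hr1).mul_left (r ^ N)).congr fun m => by rw [← pow_add])
  calc (C ^ (m + N)) i j ≤ (B ^ (m + N)) i j := pow_entry_mono hC hCB _ i j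
    _ ≤ |(B ^ (m + N)) i j| := le_abs_self _
    _ ≤ r ^ (m + N) := hgb _ (Nat.le_add_left N m) i j
    _ = r ^ (N + m) := by rw [add_comm]

/-- Neumann series inverse. -/
private noncomputable def nser (C : Matrix (Fin n) (Fin n) ℝ) : Matrix (Fin n) (Fin n) ℝ :=
  Matrix.of fun i j => ∑' m, (C ^ m) i j

private lemma nser_nonneg {C : Matrix (Fin n) (Fin n) ℝ} (hC : ∀ i j, 0 ≤ C i j) (i j : Fin n) :
    0 ≤ nser C i j :=
  tsum_nonneg fun m => pow_entry_nonneg hC m i j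

private lemma nser_diag {C : Matrix (Fin n) (Fin n) ℝ} (hC : ∀ i j, 0 ≤ C i j)
    (hsum : ∀ i j, Summable fun m => (C ^ m) i j) (i : Fin n) : 1 ≤ nser C i i := by
  have h := Summable.le_tsum (hsum i i) 0 (fun m _ => pow_entry_nonneg hC m i i)
  simpa [nser, Matrix.one_apply] using h

private lemma nser_inv {C : Matrix (Fin n) (Fin n) ℝ}
    (hsum : ∀ i j, Summable fun m => (C ^ m) i j) : (1 - C) * nser C = 1 := by
  ext i j
  rw [Matrix.sub_mul, Matrix.one_mul, Matrix.sub_apply]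
  have hCS : (C * nser C) i j = ∑' m, (C ^ (m + 1)) i j := by
    rw [Matrix.mul_apply]
    have h1 : ∀ l, C i l * ∑' m, (C ^ m) l j = ∑' m, C i l * (C ^ m) l j := by
      intro l; exact (Summable.tsum_mul_left _ (hsum l j)).symm
    simp only [nser, Matrix.of_apply]
    rw [Finset.sum_congr rfl (fun l _ => h1 l), ← Summable.tsum_finsetSum (fun l _ => (hsum l j).mul_left _)]
    congr 1; ext m
    rw [pow_succ', Matrix.mul_apply]
  rw [hCS]
  have h0 : nser C i j = (C ^ 0) i j + ∑' m, (C ^ (m + 1)) i j := by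
    simpa [nser] using Summable.tsum_eq_zero_add (hsum i j)
  rw [h0, pow_zero]; ring

private lemma nser_col_single {C : Matrix (Fin n) (Fin n) ℝ} (k : Fin n) (hcol : ∀ l, C l k = 0)
    (i : Fin n) : nser C i k = (1 : Matrix (Fin n) (Fin n) ℝ) i k := by
  have h : ∀ m, m ≠ 0 → (C ^ m) i k = 0 := by
    intro m hm
    obtain ⟨m', rfl⟩ := Nat.exists_eq_succ_of_ne_zero hm
    rw [pow_succ, Matrix.mul_apply]
    exact Finset.sum_eq_zero fun l _ => by rw [hcol l, mul_zero]
  have : ∑' m, (C ^ m) i k = (C ^ 0) i k := tsum_eq_single (f := fun m => (C ^ m) i k) 0 h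
  simpa [nser] using this

end Neumann

theorem stmt19 {n : ℕ} (B : Matrix (Fin n) (Fin n) ℝ) (b : Fin n → ℝ)
    (hB : ∀ i j, 0 ≤ B i j) (hρ : specRad B < 1) (k : Fin n)
    (hb : ∀ i, i ≠ k → 0 ≤ b i) :
    let M := (1 - B)⁻¹
    let x : Fin n → ℝ := fun i =>
      max ((M.mulVec b) i)
        ((M.mulVec b) i - 2 * (M.mulVec b) k / (2 * M k k - 1) * ((M - 1).mulVec (Pi.single k 1) i))
    (x - B.mulVec (absv x) = b) ∧ ∀ y : Fin n → ℝ, y - B.mulVec (absv y) = b → y = x := by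
  intro M x
  obtain ⟨r, hr0, hr1, N, hgb⟩ := geom_bound B hρ
  have hsumB : ∀ i j, Summable fun m => (B ^ m) i j :=
    summable_pow_entry hr0 hr1 hgb hB (fun i j => le_refl _)
  have hinvB : (1 - B) * nser B = 1 := nser_inv hsumB
  have hMdef : M = nser B := Matrix.inv_eq_right_inv hinvB
  have hMl : (1 - B) * M = 1 := by rw [hMdef]; exact hinvB
  have hMr : M * (1 - B) = 1 := mul_eq_one_comm.mp hMl
  have hM0 : ∀ i j, 0 ≤ M i j := by rw [hMdef]; exact nser_nonneg hB
  have hMkk : 1 ≤ M k k := by rw [hMdef]; exact nser_diag hB hsumB k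
  -- the column-deleted matrix
  set C : Matrix (Fin n) (Fin n) ℝ := Matrix.of fun i j => if j = k then 0 else B i j with hCdef
  have hC0 : ∀ i j, 0 ≤ C i j := by
    intro i j; rw [hCdef]; dsimp only [Matrix.of_apply]
    split <;> [exact le_refl 0; exact hB i j]
  have hCB : ∀ i j, C i j ≤ B i j := by
    intro i j; rw [hCdef]; dsimp only [Matrix.of_apply]
    split <;> [exact hB i j; exact le_refl _]
  have hsumC : ∀ i j, Summable fun m => (C ^ m) i j :=
    summable_pow_entry hr0 hr1 hgb hC0 hCB
  set W := nser C with hWdef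
  have hinvC : (1 - C) * W = 1 := nser_inv hsumC
  have hWl : W * (1 - C) = 1 := mul_eq_one_comm.mp hinvC
  have hW0 : ∀ i j, 0 ≤ W i j := nser_nonneg hC0
  have hWik : ∀ i, W i k = (1 : Matrix (Fin n) (Fin n) ℝ) i k :=
    nser_col_single k (fun l => by rw [hCdef]; simp) 
  -- key rank-one identity
  have e2 : M = W + W * ((B - C) * M) := by
    have e1 : (1 - C) * M = 1 + (B - C) * M := by
      have h : (1 : Matrix (Fin n) (Fin n) ℝ) - C = (1 - B) + (B - C) := by abel
      rw [h, Matrix.add_mul, hMl]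
    calc M = (W * (1 - C)) * M := by rw [hWl, Matrix.one_mul]
      _ = W * ((1 - C) * M) := by rw [Matrix.mul_assoc]
      _ = W * (1 + (B - C) * M) := by rw [e1]
      _ = W + W * ((B - C) * M) := by rw [Matrix.mul_add, Matrix.mul_one]
  set u : Fin n → ℝ := fun i => ∑ l, W i l * B l k with hudef
  have hu0 : ∀ i, 0 ≤ u i := fun i =>
    Finset.sum_nonneg fun l _ => mul_nonneg (hW0 i l) (hB l k)
  have hkey : ∀ i j, M i j = W i j + u i * M k j := by
    intro i j
    have hin : ∀ l, ((B - C) * M) l j = B l k * M k j := by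
      intro l
      rw [Matrix.mul_apply]
      rw [Finset.sum_eq_single k]
      · rw [Matrix.sub_apply, hCdef]; simp
      · intro p _ hp
        rw [Matrix.sub_apply, hCdef]; simp [hp]
      · intro h; exact absurd (Finset.mem_univ k) h
    conv_lhs => rw [e2]
    rw [Matrix.add_apply, Matrix.mul_apply, hudef]
    congr 1
    rw [Finset.sum_mul]
    exact Finset.sum_congr rfl fun l _ => by rw [hin l]; ring
  have hMik : ∀ i, i ≠ k → M i k = u i * M k k := by
    intro i hik
    have h := hkey i k
    rw [hWik i, Matrix.one_apply_ne hik, zero_add] at h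
    exact h
  have path : ∀ i j, i ≠ k → M i k * M k j ≤ M k k * M i j := by
    intro i j hik
    rw [hMik i hik, hkey i j]
    have h1 : 0 ≤ M k k * W i j :=
      mul_nonneg (le_trans zero_le_one hMkk) (hW0 i j)
    nlinarith [h1]
  set p : Fin n → ℝ := M.mulVec b with hpdef
  have hpapp : ∀ i, p i = ∑ j, M i j * b j := by
    intro i; rw [hpdef]; rfl
  have step1 : ∀ i, i ≠ k → M i k * p k ≤ M k k * p i := by
    intro i hik
    have hexp : M k k * p i - M i k * p k = ∑ j, (M k k * M i j - M i k * M k j) * b j := by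
      rw [hpapp, hpapp, Finset.mul_sum, Finset.mul_sum, ← Finset.sum_sub_distrib]
      exact Finset.sum_congr rfl fun j _ => by ring
    have hnn : 0 ≤ ∑ j, (M k k * M i j - M i k * M k j) * b j := by
      refine Finset.sum_nonneg fun j _ => ?_
      by_cases hj : j = k
      · rw [hj]
        have h0 : (M k k * M i k - M i k * M k k) * b k = 0 := by ring
        exact le_of_eq h0.symm
      · exact mul_nonneg (sub_nonneg.mpr (path i j hik)) (hb j hj)
    linarith [hexp ▸ hnn]
  have hMkk0 : 0 < M k k := lt_of_lt_of_le zero_lt_one hMkk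
  have hD : (1:ℝ) ≤ 2 * M k k - 1 := by linarith
  have hD0 : (0:ℝ) < 2 * M k k - 1 := by linarith
  have hDne : (2 * M k k - 1) ≠ 0 := ne_of_gt hD0
  set t : ℝ := 2 * p k / (2 * M k k - 1) with htdef
  have htD : t * (2 * M k k - 1) = 2 * p k := div_mul_cancel₀ _ hDne
  set e : Fin n → ℝ := Pi.single k 1 with hedef
  set g : Fin n → ℝ := (M - 1).mulVec e with hgdef
  have hsingle : ∀ i, g i = M i k - (1 : Matrix (Fin n) (Fin n) ℝ) i k := by
    intro i
    show ((M - 1).mulVec e) i = _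
    rw [hedef, Matrix.mulVec_single]
    show (M - 1) i k * 1 = _
    rw [Matrix.sub_apply]; ring
  have hxdef : ∀ i, x i = max (p i) (p i - t * g i) := fun i => rfl
  have hgnn : ∀ i, 0 ≤ M i k - (1 : Matrix (Fin n) (Fin n) ℝ) i k := by
    intro i
    by_cases hik : i = k
    · subst hik; rw [Matrix.one_apply_eq]; linarith
    · rw [Matrix.one_apply_ne hik]; linarith [hM0 i k]
  -- the main equation
  have hmain : M.mulVec b - B.mulVec (M.mulVec b) = b := by
    rw [Matrix.mulVec_mulVec]
    have h : M.mulVec b - (B * M).mulVec b = ((1 - B) * M).mulVec b := by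
      rw [Matrix.sub_mul, Matrix.one_mul, Matrix.sub_mulVec]
    rw [h, hMl, Matrix.one_mulVec]
  have hex : x - B.mulVec (absv x) = b := by
    by_cases hpk : 0 ≤ p k
    · -- Case 1 : (Mb)ₖ ≥ 0, so x = Mb ≥ 0
      have ht0 : 0 ≤ t := div_nonneg (by linarith) (le_of_lt hD0)
      have hxp : x = p := by
        funext i
        rw [hxdef i, max_eq_left]
        have h0 : 0 ≤ t * g i := by rw [hsingle i]; exact mul_nonneg ht0 (hgnn i)
        linarith
      have hp0 : ∀ i, 0 ≤ p i := by
        intro i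
        by_cases hik : i = k
        · subst hik; exact hpk
        · have h1 := step1 i hik
          nlinarith [mul_nonneg (hM0 i k) hpk]
      have habs : absv x = x := by
        funext i
        rw [hxp]
        exact abs_of_nonneg (hp0 i)
      rw [habs, hxp, hpdef]
      exact hmain
    · -- Case 2 : (Mb)ₖ < 0
      push_neg at hpk
      have ht0 : t < 0 := div_neg_of_neg_of_pos (by linarith) hD0
      have hxv : x = fun i => p i - t * g i := by
        funext i
        rw [hxdef i, max_eq_right]
        have h0 : 0 ≤ g i := by rw [hsingle i]; exact hgnn i
        have := mul_nonpos_of_nonpos_of_nonneg (le_of_lt ht0) h0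
        linarith [this]
      have hgk : g k = M k k - 1 := by
        rw [hsingle k, Matrix.one_apply_eq]
      have hxk : x k = p k / (2 * M k k - 1) := by
        rw [hxv]; dsimp only
        rw [hgk, htdef]
        field_simp
        ring
      have hxkneg : x k < 0 := by
        rw [hxk]
        exact div_neg_of_neg_of_pos hpk hD0
      have hxid : ∀ i, i ≠ k → x i = p i - t * M i k := by
        intro i hik
        rw [hxv]; dsimp only
        rw [hsingle i, Matrix.one_apply_ne hik, sub_zero]
      have hxnn : ∀ i, i ≠ k → 0 ≤ x i := by
        intro i hik
        rw [hxid i hik]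
        have h1 := step1 i hik
        have h2 : 0 ≤ M i k := hM0 i k
        nlinarith [mul_nonneg (mul_nonneg h2 (le_of_lt (neg_pos.mpr ht0))) (le_of_lt hMkk0)]
      have ht2xk : t = 2 * x k := by
        rw [hxk, htdef]; field_simp
      have habs : absv x = x - t • e := by
        funext j
        by_cases hjk : j = k
        · rw [hjk]
          have h : absv x k = -(x k) := abs_of_nonpos (le_of_lt hxkneg)
          rw [h, Pi.sub_apply, Pi.smul_apply, hedef, Pi.single_eq_same, smul_eq_mul, mul_one,
            ht2xk]
          ring
        · have h : absv x j = x j := abs_of_nonneg (hxnn j hjk)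
          rw [h, Pi.sub_apply, Pi.smul_apply, hedef, Pi.single_eq_of_ne hjk, smul_eq_mul,
            mul_zero, sub_zero]
      have h2 : g - B.mulVec g = B.mulVec e := by
        have ha : (1 - B).mulVec g = g - B.mulVec g := by
          rw [Matrix.sub_mulVec, Matrix.one_mulVec]
        have hbb : (1 - B) * (M - 1) = B := by
          rw [Matrix.mul_sub, Matrix.mul_one, hMl]; abel
        rw [← ha, hgdef, Matrix.mulVec_mulVec, hbb]
      have hxv' : x = p - t • g := by
        funext i; rw [hxv]
        simp [Pi.sub_apply, Pi.smul_apply, smul_eq_mul]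
      calc x - B.mulVec (absv x)
          = (p - t • g) - B.mulVec ((p - t • g) - t • e) := by rw [habs, hxv']
        _ = (p - B.mulVec p) - t • (g - B.mulVec g) + t • (B.mulVec e) := by
            rw [Matrix.mulVec_sub, Matrix.mulVec_sub, Matrix.mulVec_smul, Matrix.mulVec_smul,
              smul_sub]
            abel
        _ = b - t • (B.mulVec e) + t • (B.mulVec e) := by
            rw [h2]
            have hm : p - B.mulVec p = b := hmain
            rw [hm]
        _ = b := by abel
  refine ⟨hex, fun y hy => ?_⟩
  -- uniqueness
  set d : Fin n → ℝ := fun i => |y i - x i| with hddef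
  have hd0 : ∀ i, 0 ≤ d i := fun i => abs_nonneg _
  have hsub : y - x = B.mulVec (absv y - absv x) := by
    rw [Matrix.mulVec_sub]
    linear_combination hy - hex
  have hd : ∀ i, d i ≤ ∑ j, B i j * d j := by
    intro i
    have h1 : y i - x i = ∑ j, B i j * (absv y j - absv x j) := by
      have := congrFun hsub i
      rw [Pi.sub_apply] at this
      rw [this]; rfl
    rw [hddef]; dsimp only
    rw [h1]
    calc |∑ j, B i j * (absv y j - absv x j)|
        ≤ ∑ j, |B i j * (absv y j - absv x j)| := Finset.abs_sum_le_sum_abs _ _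
      _ ≤ ∑ j, B i j * |y j - x j| := by
          refine Finset.sum_le_sum fun j _ => ?_
          rw [abs_mul, abs_of_nonneg (hB i j)]
          refine mul_le_mul_of_nonneg_left ?_ (hB i j)
          exact abs_abs_sub_abs_le_abs_sub _ _
  have hMd : ∀ i, d i = ∑ j, M i j * (d j - ∑ l, B j l * d l) := by
    intro i
    have h1 : M.mulVec ((1 - B).mulVec d) = d := by
      rw [Matrix.mulVec_mulVec, hMr, Matrix.one_mulVec]
    have h2 := congrFun h1 i
    rw [← h2]
    have h3 : ∀ j, ((1 - B).mulVec d) j = d j - ∑ l, B j l * d l := by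
      intro j
      rw [Matrix.sub_mulVec, Matrix.one_mulVec, Pi.sub_apply]
      congr 1
    show ∑ j, M i j * ((1 - B).mulVec d) j = _
    exact Finset.sum_congr rfl fun j _ => by rw [h3 j]
  have hdz : ∀ i, d i = 0 := by
    intro i
    refine le_antisymm ?_ (hd0 i)
    rw [hMd i]
    refine Finset.sum_nonpos fun j _ => ?_
    exact mul_nonpos_of_nonneg_of_nonpos (hM0 i j) (by linarith [hd j])
  funext i
  have := hdz i
  rw [hddef] at this
  dsimp only at this
  have := abs_eq_zero.mp this
  linarith [sub_eq_zero.mp this]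
end
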